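/- Let (Ω, ℱ, ℙ) be a probability space, T > 0, and X : [0,T] → Ω → ℝ a process with X_t measurable, E[|X_t|²] < ∞ for all t ∈ [0,T], and sup_{t ∈ [0,T]} E[|X_t|²] < ∞. Let m > 0 and η ∈ A(m) with activation function φ. If X is mean-square continuous on [0,T] (for every t ∈ [0,T], E[|X_s − X_t|²] → 0 as s → t within [0,T]), then the SINNO converges uniformly in mean square: sup_{t ∈ [0,T]} E[|S_n(X,t) − X_t|²] → 0 as n → ∞. -/
import Mathlib


open MeasureTheory Filter

def ClassA (m : ℝ) (η : ℝ → ℝ) : Prop :=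
  Monotone η ∧ (∀ t : ℝ, m ≤ t → η t = 1) ∧ (∀ t : ℝ, t ≤ -m → η t = 0)

noncomputable def act (m : ℝ) (η : ℝ → ℝ) (t : ℝ) : ℝ :=
  η (t + m) - η (t - m)

/-- The stochastic interpolation neural network operator (SINNO) with nodes
`t_k = k * (T / n)`, `k = 0, …, n`, and step `δ = T / n`. -/
noncomputable def SINNO {Ω : Type*} (m : ℝ) (η : ℝ → ℝ) (T : ℝ) (n : ℕ)
    (X : ℝ → Ω → ℝ) (t : ℝ) (ω : Ω) : ℝ :=
  ∑ k ∈ Finset.range (n + 1),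
    X (k * (T / n)) ω * act m η ((2 * m / (T / n)) * (t - k * (T / n)))

/-- The mean-square modulus of continuity of a stochastic process `X` on `[0, T]`. -/
noncomputable def msModulus {Ω : Type*} [MeasurableSpace Ω] (P : Measure Ω) (T : ℝ)
    (X : ℝ → Ω → ℝ) (h : ℝ) : ℝ :=
  sSup {e : ℝ | ∃ t ∈ Set.Icc (0 : ℝ) T, ∃ s ∈ Set.Icc (0 : ℝ) T,
    |t - s| ≤ h ∧ e = ∫ ω, (X t ω - X s ω) ^ 2 ∂P}

lemma ClassA.nonneg' {m : ℝ} {η : ℝ → ℝ} (hη : ClassA m η) (x : ℝ) : 0 ≤ η x := by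
  rcases le_total x (-m) with h | h
  · rw [hη.2.2 x h]
  · rw [← hη.2.2 (-m) le_rfl]; exact hη.1 h

lemma ClassA.le_one' {m : ℝ} {η : ℝ → ℝ} (hη : ClassA m η) (x : ℝ) : η x ≤ 1 := by
  rcases le_total m x with h | h
  · rw [hη.2.1 x h]
  · rw [← hη.2.1 m le_rfl]; exact hη.1 h

lemma act_nonneg {m : ℝ} (hm : 0 < m) {η : ℝ → ℝ} (hη : ClassA m η) (x : ℝ) :
    0 ≤ act m η x :=
  sub_nonneg.2 (hη.1 (by linarith))

lemma act_eq_zero {m : ℝ} (hm : 0 < m) {η : ℝ → ℝ} (hη : ClassA m η) {x : ℝ}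
    (hx : 2 * m ≤ |x|) : act m η x = 0 := by
  rcases le_abs.mp hx with h | h
  · rw [act, hη.2.1 _ (by linarith), hη.2.1 _ (by linarith), sub_self]
  · rw [act, hη.2.2 _ (by linarith), hη.2.2 _ (by linarith), sub_self]

lemma act_sum {m : ℝ} (hm : 0 < m) {η : ℝ → ℝ} (hη : ClassA m η) {T : ℝ} (hT : 0 < T)
    {n : ℕ} (hn : 0 < n) {t : ℝ} (ht : t ∈ Set.Icc (0 : ℝ) T) :
    ∑ k ∈ Finset.range (n + 1),
      act m η ((2 * m / (T / n)) * (t - k * (T / n))) = 1 := by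
  have hnR : (0 : ℝ) < n := by exact_mod_cast hn
  have hδ : (0 : ℝ) < T / n := div_pos hT hnR
  have hcδ : (2 * m / (T / n)) * (T / n) = 2 * m := div_mul_cancel₀ _ (ne_of_gt hδ)
  have hcpos : 0 < 2 * m / (T / n) := div_pos (by linarith) hδ
  have key : ∀ k : ℕ, act m η ((2 * m / (T / n)) * (t - k * (T / n))) =
      (fun k : ℕ => η ((2 * m / (T / n)) * (t - k * (T / n)) + m)) k -
      (fun k : ℕ => η ((2 * m / (T / n)) * (t - k * (T / n)) + m)) (k + 1) := by
    intro k
    have harg : (2 * m / (T / n)) * (t - ((k : ℝ) + 1) * (T / n)) + m =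
        (2 * m / (T / n)) * (t - k * (T / n)) - m := by linear_combination -hcδ
    simp only [act]
    congr 1
    push_cast
    rw [harg]
  rw [Finset.sum_congr rfl (fun k _ => key k), Finset.sum_range_sub']
  have h0 : η ((2 * m / (T / n)) * (t - (0 : ℕ) * (T / n)) + m) = 1 := by
    apply hη.2.1
    have : 0 ≤ (2 * m / (T / n)) * t := mul_nonneg hcpos.le ht.1
    norm_num
    nlinarith
  have hnT : (n : ℝ) * (T / n) = T := mul_div_cancel₀ _ (ne_of_gt hnR)
  have h1 : η ((2 * m / (T / n)) * (t - ((n : ℕ) + 1 : ℕ) * (T / n)) + m) = 0 := by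
    apply hη.2.2
    have hle : t - ((n : ℝ) + 1) * (T / n) ≤ -(T / n) := by
      push_cast; nlinarith [ht.2]
    have : (2 * m / (T / n)) * (t - ((n : ℝ) + 1) * (T / n)) ≤
        (2 * m / (T / n)) * (-(T / n)) := by
      exact mul_le_mul_of_nonneg_left hle hcpos.le
    push_cast
    nlinarith
  simp only [h0, h1]
  norm_num

theorem sinno_uniform_meanSquare_convergence {Ω : Type*} [MeasurableSpace Ω] (P : Measure Ω)
    [IsProbabilityMeasure P] (T : ℝ) (hT : 0 < T) (X : ℝ → Ω → ℝ)
    (hmeas : ∀ s ∈ Set.Icc (0 : ℝ) T, Measurable (X s))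
    (hL2 : ∀ s ∈ Set.Icc (0 : ℝ) T, Integrable (fun ω => (X s ω) ^ 2) P)
    (hbdd : BddAbove {e : ℝ | ∃ s ∈ Set.Icc (0 : ℝ) T, e = ∫ ω, (X s ω) ^ 2 ∂P})
    (m : ℝ) (hm : 0 < m) (η : ℝ → ℝ) (hη : ClassA m η)
    (hcont : ∀ t ∈ Set.Icc (0 : ℝ) T,
      Tendsto (fun s => ∫ ω, (X s ω - X t ω) ^ 2 ∂P)
        (nhdsWithin t (Set.Icc (0 : ℝ) T)) (nhds 0)) :
    Tendsto (fun n : ℕ =>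
        sSup {e : ℝ | ∃ t ∈ Set.Icc (0 : ℝ) T,
          e = ∫ ω, (SINNO m η T n X t ω - X t ω) ^ 2 ∂P})
      atTop (nhds 0) := by
  -- integrability of squared differences
  have Fint : ∀ a ∈ Set.Icc (0:ℝ) T, ∀ b ∈ Set.Icc (0:ℝ) T,
      Integrable (fun ω => (X a ω - X b ω) ^ 2) P := by
    intro a ha b hb
    refine Integrable.mono' (g := fun ω => 2 * (X a ω) ^ 2 + 2 * (X b ω) ^ 2)
      (((hL2 a ha).const_mul 2).add ((hL2 b hb).const_mul 2))
      ((((hmeas a ha).sub (hmeas b hb)).pow_const 2).aestronglyMeasurable)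
      (ae_of_all _ fun ω => ?_)
    have hb2 : (X a ω - X b ω) ^ 2 ≤ 2 * (X a ω) ^ 2 + 2 * (X b ω) ^ 2 := by
      nlinarith [sq_nonneg (X a ω + X b ω)]
    simpa [Real.norm_eq_abs, abs_of_nonneg (sq_nonneg (X a ω - X b ω))] using hb2
  -- triangle-type inequality
  have Ftri : ∀ a ∈ Set.Icc (0:ℝ) T, ∀ b ∈ Set.Icc (0:ℝ) T, ∀ u ∈ Set.Icc (0:ℝ) T,
      ∫ ω, (X a ω - X b ω) ^ 2 ∂P ≤
        2 * ∫ ω, (X a ω - X u ω) ^ 2 ∂P + 2 * ∫ ω, (X b ω - X u ω) ^ 2 ∂P := by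
    intro a ha b hb u hu
    have hint : Integrable
        (fun ω => 2 * (X a ω - X u ω) ^ 2 + 2 * (X b ω - X u ω) ^ 2) P :=
      ((Fint a ha u hu).const_mul 2).add ((Fint b hb u hu).const_mul 2)
    have heq : ∫ ω, (2 * (X a ω - X u ω) ^ 2 + 2 * (X b ω - X u ω) ^ 2) ∂P =
        2 * ∫ ω, (X a ω - X u ω) ^ 2 ∂P + 2 * ∫ ω, (X b ω - X u ω) ^ 2 ∂P := by
      rw [integral_add ((Fint a ha u hu).const_mul 2) ((Fint b hb u hu).const_mul 2),
        integral_const_mul, integral_const_mul]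
    rw [← heq]
    refine integral_mono_of_nonneg (ae_of_all _ fun ω => sq_nonneg _) hint
      (ae_of_all _ fun ω => ?_)
    show (X a ω - X b ω) ^ 2 ≤ 2 * (X a ω - X u ω) ^ 2 + 2 * (X b ω - X u ω) ^ 2
    nlinarith [sq_nonneg (X a ω - X u ω + (X b ω - X u ω))]
  -- uniform mean-square continuity
  have hunif : ∀ ε > (0:ℝ), ∃ δ0 > (0:ℝ), ∀ a ∈ Set.Icc (0:ℝ) T, ∀ b ∈ Set.Icc (0:ℝ) T,
      |a - b| ≤ δ0 → ∫ ω, (X a ω - X b ω) ^ 2 ∂P ≤ ε := by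
    intro ε hε
    by_contra hcon
    push_neg at hcon
    choose a ha b hb hab hF using fun n : ℕ => hcon (1 / ((n : ℝ) + 1)) (by positivity)
    obtain ⟨u, hu, φ, hφ, hbφ⟩ := isCompact_Icc.tendsto_subseq hb
    have haφ : Tendsto (fun n => a (φ n)) atTop (nhds u) := by
      rw [tendsto_iff_dist_tendsto_zero]
      have h1 : Tendsto (fun n : ℕ => 1 / ((φ n : ℝ) + 1) + dist (b (φ n)) u)
          atTop (nhds 0) := by
        have t1 : Tendsto (fun n : ℕ => 1 / ((φ n : ℝ) + 1)) atTop (nhds 0) :=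
          tendsto_one_div_add_atTop_nhds_zero_nat.comp hφ.tendsto_atTop
        have t2 : Tendsto (fun n => dist (b (φ n)) u) atTop (nhds 0) :=
          tendsto_iff_dist_tendsto_zero.mp hbφ
        simpa using t1.add t2
      refine squeeze_zero (fun n => dist_nonneg) (fun n => ?_) h1
      calc dist (a (φ n)) u ≤ dist (a (φ n)) (b (φ n)) + dist (b (φ n)) u :=
            dist_triangle _ _ _
        _ ≤ 1 / ((φ n : ℝ) + 1) + dist (b (φ n)) u := by
            have := hab (φ n)
            rw [Real.dist_eq]
            gcongr
    have hain : Tendsto (fun n => a (φ n)) atTop (nhdsWithin u (Set.Icc (0:ℝ) T)) :=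
      tendsto_nhdsWithin_of_tendsto_nhds_of_eventually_within _ haφ
        (Eventually.of_forall fun n => ha (φ n))
    have hbin : Tendsto (fun n => b (φ n)) atTop (nhdsWithin u (Set.Icc (0:ℝ) T)) :=
      tendsto_nhdsWithin_of_tendsto_nhds_of_eventually_within _ hbφ
        (Eventually.of_forall fun n => hb (φ n))
    have hFa : Tendsto (fun n => ∫ ω, (X (a (φ n)) ω - X u ω) ^ 2 ∂P) atTop (nhds 0) :=
      (hcont u hu).comp hain
    have hFb : Tendsto (fun n => ∫ ω, (X (b (φ n)) ω - X u ω) ^ 2 ∂P) atTop (nhds 0) :=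
      (hcont u hu).comp hbin
    have hsum : Tendsto (fun n => 2 * (∫ ω, (X (a (φ n)) ω - X u ω) ^ 2 ∂P) +
        2 * (∫ ω, (X (b (φ n)) ω - X u ω) ^ 2 ∂P)) atTop (nhds 0) := by
      simpa using (hFa.const_mul 2).add (hFb.const_mul 2)
    obtain ⟨n, hn⟩ := (hsum.eventually_lt_const hε).exists
    have h1 := hF (φ n)
    have h2 := Ftri (a (φ n)) (ha (φ n)) (b (φ n)) (hb (φ n)) u hu
    linarith
  -- main estimate
  rw [Metric.tendsto_atTop]
  intro ε hε
  obtain ⟨δ0, hδ0, hδ0p⟩ := hunif (ε / 2) (by positivity)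
  obtain ⟨N0, hN0⟩ := exists_nat_ge (T / δ0)
  refine ⟨max N0 1, fun n hn => ?_⟩
  have hn1 : 1 ≤ n := le_trans (le_max_right _ _) hn
  have hnpos : (0:ℝ) < n := by exact_mod_cast hn1
  have hδpos : 0 < T / n := div_pos hT hnpos
  have hδle : T / n ≤ δ0 := by
    rw [div_le_iff₀ hnpos]
    have hNn : (N0 : ℝ) ≤ n := by exact_mod_cast le_trans (le_max_left _ _) hn
    calc T = δ0 * (T / δ0) := by field_simp
      _ ≤ δ0 * n := by gcongr; linarith
  have hub : ∀ e ∈ {e : ℝ | ∃ t ∈ Set.Icc (0 : ℝ) T,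
      e = ∫ ω, (SINNO m η T n X t ω - X t ω) ^ 2 ∂P}, e ≤ ε / 2 := by
    rintro e ⟨t, ht, rfl⟩
    have hsum1 : ∑ k ∈ Finset.range (n + 1),
        act m η ((2 * m / (T / n)) * (t - k * (T / n))) = 1 :=
      act_sum hm hη hT hn1 ht
    have hcδ : (2 * m / (T / n)) * (T / n) = 2 * m := div_mul_cancel₀ _ (ne_of_gt hδpos)
    have hcpos : 0 < 2 * m / (T / n) := div_pos (by linarith) hδpos
    have hnode : ∀ k ∈ Finset.range (n + 1), (k : ℝ) * (T / n) ∈ Set.Icc (0:ℝ) T := by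
      intro k hk
      have hk' : (k : ℝ) ≤ n := by
        exact_mod_cast Nat.lt_succ_iff.mp (Finset.mem_range.mp hk)
      constructor
      · positivity
      · calc (k : ℝ) * (T / n) ≤ (n : ℝ) * (T / n) :=
            mul_le_mul_of_nonneg_right hk' hδpos.le
          _ = T := mul_div_cancel₀ _ (ne_of_gt hnpos)
    have hφnn : ∀ k : ℕ, 0 ≤ act m η ((2 * m / (T / n)) * (t - k * (T / n))) :=
      fun k => act_nonneg hm hη _
    -- pointwise Cauchy–Schwarz bound
    have hpt : ∀ ω, (SINNO m η T n X t ω - X t ω) ^ 2 ≤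
        ∑ k ∈ Finset.range (n + 1), (X (k * (T / n)) ω - X t ω) ^ 2 *
          act m η ((2 * m / (T / n)) * (t - k * (T / n))) := by
      intro ω
      have hrw : SINNO m η T n X t ω - X t ω =
          ∑ k ∈ Finset.range (n + 1), (X (k * (T / n)) ω - X t ω) *
            act m η ((2 * m / (T / n)) * (t - k * (T / n))) := by
        simp only [SINNO, sub_mul, Finset.sum_sub_distrib, ← Finset.mul_sum, hsum1, mul_one]
      rw [hrw]
      have cs := Finset.sum_mul_sq_le_sq_mul_sq (Finset.range (n + 1))
        (fun k => Real.sqrt (act m η ((2 * m / (T / n)) * (t - k * (T / n)))))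
        (fun k => (X (k * (T / n)) ω - X t ω) *
          Real.sqrt (act m η ((2 * m / (T / n)) * (t - k * (T / n)))))
      have e1 : ∀ k : ℕ,
          Real.sqrt (act m η ((2 * m / (T / n)) * (t - k * (T / n)))) *
            ((X (k * (T / n)) ω - X t ω) *
              Real.sqrt (act m η ((2 * m / (T / n)) * (t - k * (T / n))))) =
          (X (k * (T / n)) ω - X t ω) *
            act m η ((2 * m / (T / n)) * (t - k * (T / n))) := by
        intro k
        rw [show ∀ a b : ℝ, a * (b * a) = b * (a * a) from fun a b => by ring,
          Real.mul_self_sqrt (hφnn k)]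
      have e2 : ∀ k : ℕ,
          (Real.sqrt (act m η ((2 * m / (T / n)) * (t - k * (T / n))))) ^ 2 =
          act m η ((2 * m / (T / n)) * (t - k * (T / n))) :=
        fun k => Real.sq_sqrt (hφnn k)
      have e3 : ∀ k : ℕ,
          ((X (k * (T / n)) ω - X t ω) *
            Real.sqrt (act m η ((2 * m / (T / n)) * (t - k * (T / n))))) ^ 2 =
          (X (k * (T / n)) ω - X t ω) ^ 2 *
            act m η ((2 * m / (T / n)) * (t - k * (T / n))) := by
        intro k
        rw [mul_pow, e2]
      simp only [e1, e2, e3] at cs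
      calc (∑ k ∈ Finset.range (n + 1), (X (k * (T / n)) ω - X t ω) *
            act m η ((2 * m / (T / n)) * (t - k * (T / n)))) ^ 2 ≤
          (∑ k ∈ Finset.range (n + 1),
            act m η ((2 * m / (T / n)) * (t - k * (T / n)))) *
          ∑ k ∈ Finset.range (n + 1), (X (k * (T / n)) ω - X t ω) ^ 2 *
            act m η ((2 * m / (T / n)) * (t - k * (T / n))) := cs
        _ = ∑ k ∈ Finset.range (n + 1), (X (k * (T / n)) ω - X t ω) ^ 2 *
            act m η ((2 * m / (T / n)) * (t - k * (T / n))) := by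
            rw [hsum1, one_mul]
    have hInt : ∀ k ∈ Finset.range (n + 1),
        Integrable (fun ω => (X (k * (T / n)) ω - X t ω) ^ 2 *
          act m η ((2 * m / (T / n)) * (t - k * (T / n)))) P :=
      fun k hk => (Fint _ (hnode k hk) t ht).mul_const _
    calc ∫ ω, (SINNO m η T n X t ω - X t ω) ^ 2 ∂P ≤
        ∫ ω, ∑ k ∈ Finset.range (n + 1), (X (k * (T / n)) ω - X t ω) ^ 2 *
          act m η ((2 * m / (T / n)) * (t - k * (T / n))) ∂P :=
          integral_mono_of_nonneg (ae_of_all _ fun ω => sq_nonneg _)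
            (integrable_finset_sum _ hInt) (ae_of_all _ hpt)
      _ = ∑ k ∈ Finset.range (n + 1), (∫ ω, (X (k * (T / n)) ω - X t ω) ^ 2 ∂P) *
          act m η ((2 * m / (T / n)) * (t - k * (T / n))) := by
          rw [integral_finset_sum _ hInt]
          exact Finset.sum_congr rfl fun k _ => integral_mul_const _ _
      _ ≤ ∑ k ∈ Finset.range (n + 1), (ε / 2) *
          act m η ((2 * m / (T / n)) * (t - k * (T / n))) := by
          refine Finset.sum_le_sum fun k hk => ?_
          by_cases hz : act m η ((2 * m / (T / n)) * (t - k * (T / n))) = 0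
          · rw [hz, mul_zero, mul_zero]
          · have hlt : |(2 * m / (T / n)) * (t - k * (T / n))| < 2 * m := by
              by_contra hge
              exact hz (act_eq_zero hm hη (le_of_not_gt hge))
            have hdist : |t - (k : ℝ) * (T / n)| < T / n := by
              rw [abs_mul, abs_of_pos hcpos] at hlt
              have := hcδ
              nlinarith [abs_nonneg (t - (k : ℝ) * (T / n))]
            have hFle : ∫ ω, (X ((k : ℝ) * (T / n)) ω - X t ω) ^ 2 ∂P ≤ ε / 2 := by
              refine hδ0p _ (hnode k hk) t ht ?_
              rw [abs_sub_comm]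
              linarith
            exact mul_le_mul_of_nonneg_right hFle (hφnn k)
      _ = ε / 2 := by rw [← Finset.mul_sum, hsum1, mul_one]
  have hnn : 0 ≤ sSup {e : ℝ | ∃ t ∈ Set.Icc (0 : ℝ) T,
      e = ∫ ω, (SINNO m η T n X t ω - X t ω) ^ 2 ∂P} := by
    refine Real.sSup_nonneg fun e he => ?_
    obtain ⟨t, ht, rfl⟩ := he
    exact integral_nonneg fun ω => sq_nonneg _
  have hle : sSup {e : ℝ | ∃ t ∈ Set.Icc (0 : ℝ) T,
      e = ∫ ω, (SINNO m η T n X t ω - X t ω) ^ 2 ∂P} ≤ ε / 2 :=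
    Real.sSup_le hub (by positivity)
  rw [Real.dist_eq, sub_zero, abs_of_nonneg hnn]
  linarith
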